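/- For every nonnegative integer n and nonnegative integer p, ∑_{k=0}^{2m} (-1)^k C(n,k) C(2p+n+k, p+k) H_k with n = 2m equals C(2p+n, p) · (2H_{2m} - H_m + H_{p+m} - H_p); and with n = 2m+1 it equals C(2p+n, p) · (H_p - H_{p+m} + H_m - 2H_{2m+1}). Here H_j denotes the j-th harmonic number and the sum runs over 0 ≤ k ≤ n. -/

import Mathlib

open Finset

noncomputable def H (n : ℕ) : ℝ := ∑ i ∈ Finset.range n, (1:ℝ)/(i+1)

/-!
Vandermonde's identity `C(2p+n+k, p+k) = ∑ᵢ C(k,i) C(2p+n, p+n-i)` turns the sum into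
`∑ᵢ C(2p+n, p+n-i) Wᵢ` with `Wᵢ = ∑ₖ (-1)^k C(n,k) C(k,i) H_k`. Since
`C(n,k) C(k,i) = C(n,i) C(n-i,k-i)`, `Wᵢ` is, up to sign, an `(n-i)`-th finite difference of the
harmonic numbers; as `ΔH_j = 1/(j+1)`, it is a Beta integral: `Wᵢ = ±1/(n-i)` for `i < n`,
`Wₙ = (-1)^n H_n`, and `Wᵢ = 0` for `i > n`. What is left is
`Vₙ = ∑_{j<n} (-1)^j C(2p+n, p+j+1)/(j+1)`. Pascal's rule gives a first-order recurrence for `Vₙ`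
whose inhomogeneous part telescopes to `C(2p+n,p) + (-1)^n C(2p+n,p+n+1)`; the sign `(-1)^n` is
why the closed form `Vₙ = C(2p+n,p) (H_n - H_⌊n/2⌋ + H_{p+⌊n/2⌋} - H_p)` depends on the parity
of `n`.
-/

lemma H_succ (n : ℕ) : H (n + 1) = H n + 1 / ((n : ℝ) + 1) := by
  simp [H, sum_range_succ]

lemma sum_range_neg_one_pow_mul_choose_succ {R : Type*} [CommRing R] (M : ℕ) (f : ℕ → R) :
    ∑ l ∈ range (M + 2), (-1) ^ l * ((M + 1).choose l : R) * f l
      = -∑ l ∈ range (M + 1), (-1) ^ l * (M.choose l : R) * (f (l + 1) - f l) := by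
  have hshift : ∑ l ∈ range (M + 1), (-1) ^ (l + 1) * (M.choose (l + 1) : R) * f (l + 1)
      = ∑ l ∈ range (M + 1), (-1) ^ l * (M.choose l : R) * f l - f 0 := by
    rw [sum_range_succ, Nat.choose_succ_self, sum_range_succ' _ M]
    simp
  rw [sum_range_succ' _ (M + 1)]
  simp only [Nat.choose_succ_succ', Nat.cast_add, mul_add, add_mul, sum_add_distrib, hshift]
  simp only [pow_succ, mul_sub, sum_sub_distrib, mul_neg, mul_one, neg_mul, sum_neg_distrib,
    pow_zero, Nat.choose_zero_right, Nat.cast_one, one_mul, neg_sub]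
  ring

lemma sum_neg_one_pow_mul_choose_mul_H_add (M i : ℕ) :
    ∑ l ∈ range (M + 2), (-1 : ℝ) ^ l * ((M + 1).choose l : ℝ) * H (l + i)
      = -(M.factorial * i.factorial / (M + 1 + i).factorial) := by
  induction M generalizing i with
  | zero =>
    simp only [zero_add, sum_range_succ, Nat.choose_zero_right, Nat.choose_self, add_comm 1 i,
      H_succ, Nat.factorial_succ]
    push_cast
    field_simp
    ring
  | succ M ih =>
    have h1 : ∑ l ∈ range (M + 2), (-1 : ℝ) ^ l * ((M + 1).choose l : ℝ) * H (l + 1 + i)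
        = -(M.factorial * (i + 1).factorial / (M + 1 + i + 1).factorial) := by
      simpa only [← add_assoc, add_right_comm _ i 1] using ih (i + 1)
    rw [sum_range_neg_one_pow_mul_choose_succ]
    simp only [mul_sub, sum_sub_distrib]
    rw [h1, ih, add_right_comm M 1 i, show M + 1 + 1 + i = M + i + 1 + 1 by ring,
      Nat.factorial_succ (M + i + 1), Nat.factorial_succ i, Nat.factorial_succ M]
    push_cast
    field_simp
    ring

lemma sum_neg_one_pow_mul_choose_mul_choose_mul_H {n i M : ℕ} (h : M + 1 + i = n) :
    ∑ k ∈ range (n + 1), (-1 : ℝ) ^ k * (n.choose k : ℝ) * (k.choose i : ℝ) * H k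
      = (-1) ^ n * (-1) ^ M / (M + 1) := by
  subst h
  have hterm : ∀ l ∈ range (M + 2),
      (-1 : ℝ) ^ (i + l) * ((M + 1 + i).choose (i + l) : ℝ) * ((i + l).choose i : ℝ) * H (i + l)
        = (-1) ^ i * ((M + 1 + i).choose i : ℝ)
          * ((-1) ^ l * ((M + 1).choose l : ℝ) * H (l + i)) := by
    intro l _
    have hchoose := Nat.choose_mul (n := M + 1 + i) (k := i + l) (Nat.le_add_right i l)
    rw [show M + 1 + i - i = M + 1 by omega, Nat.add_sub_cancel_left,
      ← Nat.cast_inj (R := ℝ)] at hchoose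
    push_cast at hchoose
    rw [pow_add, add_comm l i]
    linear_combination (-1 : ℝ) ^ i * (-1) ^ l * H (i + l) * hchoose
  rw [show M + 1 + i + 1 = i + (M + 2) by ring, sum_range_add, sum_congr rfl hterm, ← mul_sum,
    sum_neg_one_pow_mul_choose_mul_H_add]
  have hsmall : ∑ k ∈ range i, (-1 : ℝ) ^ k * ((M + 1 + i).choose k : ℝ) * (k.choose i : ℝ) * H k
      = 0 :=
    sum_eq_zero fun k hk => by simp [Nat.choose_eq_zero_of_lt (mem_range.mp hk)]
  have hfact := Nat.add_choose_mul_factorial_mul_factorial (M + 1) i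
  rw [Nat.factorial_succ, ← Nat.cast_inj (R := ℝ)] at hfact
  push_cast at hfact
  have hchoose_ne : ((M + 1 + i).choose i : ℝ) ≠ 0 :=
    Nat.cast_ne_zero.mpr (Nat.choose_pos (by omega)).ne'
  rw [hsmall, ← hfact]
  field_simp
  linear_combination (-1 : ℝ) ^ i * pow_mul_pow_eq_one M (by norm_num : (-1 : ℝ) * -1 = 1)

lemma sum_neg_one_pow_mul_choose_mul_choose_mul_H_of_le {n i : ℕ} (h : n ≤ i) :
    ∑ k ∈ range (n + 1), (-1 : ℝ) ^ k * (n.choose k : ℝ) * (k.choose i : ℝ) * H k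
      = (-1) ^ n * (n.choose i : ℝ) * H n := by
  rw [sum_range_succ, sum_eq_zero fun k hk => by
    simp [Nat.choose_eq_zero_of_lt ((mem_range.mp hk).trans_le h)]]
  simp

lemma choose_add_add_eq_sum_range (r s k : ℕ) :
    (r + s + k).choose (r + k) = ∑ i ∈ range (s + 1), k.choose i * (r + s).choose (s - i) := by
  rw [Nat.choose_symm_of_eq_add (show r + s + k = r + k + s by ring),
    show r + s + k = k + (r + s) by ring, Nat.add_choose_eq,
    Nat.sum_antidiagonal_eq_sum_range_succ_mk]

lemma sum_neg_one_pow_mul_choose_mul_choose_add_mul_H_eq_sum (p n : ℕ) :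
    ∑ k ∈ range (n + 1),
        (-1 : ℝ) ^ k * (n.choose k : ℝ) * ((2 * p + n + k).choose (p + k) : ℝ) * H k
      = (-1) ^ n * (((2 * p + n).choose p : ℝ) * H n
          + ∑ j ∈ range n, (-1) ^ j * ((2 * p + n).choose (p + j + 1) : ℝ) / (j + 1)) := by
  set W : ℕ → ℝ := fun i =>
    ∑ k ∈ range (n + 1), (-1 : ℝ) ^ k * (n.choose k : ℝ) * (k.choose i : ℝ) * H k with hW
  have hvandermonde : ∑ k ∈ range (n + 1),
        (-1 : ℝ) ^ k * (n.choose k : ℝ) * ((2 * p + n + k).choose (p + k) : ℝ) * H k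
      = ∑ i ∈ range (n + 1 + p), W i * ((2 * p + n).choose (p + n - i) : ℝ) := by
    have hsplit : ∀ k, ((2 * p + n + k).choose (p + k) : ℝ)
        = ∑ i ∈ range (n + 1 + p), (k.choose i : ℝ) * ((2 * p + n).choose (p + n - i) : ℝ) := by
      intro k
      rw [show 2 * p + n = p + (p + n) by ring, show n + 1 + p = p + n + 1 by ring,
        choose_add_add_eq_sum_range]
      norm_cast
    simp only [hW, hsplit, mul_sum, sum_mul]
    rw [sum_comm]
    exact sum_congr rfl fun i _ => sum_congr rfl fun k _ => by ring
  have hlarge : ∑ t ∈ range p, W (n + 1 + t) * ((2 * p + n).choose (p + n - (n + 1 + t)) : ℝ)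
      = 0 := sum_eq_zero fun t _ => by
    simp [hW, sum_neg_one_pow_mul_choose_mul_choose_mul_H_of_le (show n ≤ n + 1 + t by omega),
      Nat.choose_eq_zero_of_lt (show n < n + 1 + t by omega)]
  have hsmall : ∀ j ∈ range n, W (n - 1 - j) * ((2 * p + n).choose (p + n - (n - 1 - j)) : ℝ)
      = (-1) ^ n * ((-1) ^ j * ((2 * p + n).choose (p + j + 1) : ℝ) / (j + 1)) := fun j hj => by
    have hj := mem_range.mp hj
    simp only [hW]
    rw [sum_neg_one_pow_mul_choose_mul_choose_mul_H (M := j) (by omega),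
      show p + n - (n - 1 - j) = p + j + 1 by omega]
    ring
  rw [hvandermonde, sum_range_add, hlarge, add_zero,
    sum_range_succ, ← sum_range_reflect, sum_congr rfl hsmall, ← mul_sum]
  simp only [hW]
  rw [sum_neg_one_pow_mul_choose_mul_choose_mul_H_of_le le_rfl, Nat.choose_self, Nat.cast_one,
    mul_one, add_tsub_cancel_right]
  ring

noncomputable def harmonicHalfDiff (p n : ℕ) : ℝ := H n - H (n / 2) + H (p + n / 2) - H p

lemma harmonicHalfDiff_succ (p n : ℕ) :
    harmonicHalfDiff p (n + 1)
      = harmonicHalfDiff p n + (-1) ^ n / (n + 1) + (1 - (-1) ^ n) / (2 * p + n + 1) := by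
  unfold harmonicHalfDiff
  obtain ⟨m, rfl | rfl⟩ := Nat.even_or_odd' n
  · rw [show (2 * m + 1) / 2 = m by omega, show 2 * m / 2 = m by omega, H_succ,
      (even_two_mul m).neg_one_pow]
    ring
  · rw [show (2 * m + 1 + 1) / 2 = m + 1 by omega, show (2 * m + 1) / 2 = m by omega,
      H_succ (2 * m + 1), ← add_assoc, H_succ (p + m), H_succ m,
      (odd_two_mul_add_one m).neg_one_pow]
    push_cast
    field_simp
    ring

lemma sum_neg_one_pow_mul_choose_div_recurrence (p n : ℕ) :
    (p + n + 1 : ℝ) * ∑ j ∈ range (n + 1),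
        (-1) ^ j * ((2 * p + (n + 1)).choose (p + j + 1) : ℝ) / (j + 1)
      = (2 * p + n + 1) * ∑ j ∈ range (n + 1),
          (-1) ^ j * ((2 * p + n).choose (p + j + 1) : ℝ) / (j + 1)
        + ((2 * p + n).choose p + (-1) ^ n * (2 * p + n).choose (p + n + 1)) := by
  have hterm : ∀ j ∈ range (n + 1),
      (p + n + 1 : ℝ) * ((-1) ^ j * ((2 * p + (n + 1)).choose (p + j + 1) : ℝ) / (j + 1))
        = (2 * p + n + 1) * ((-1) ^ j * ((2 * p + n).choose (p + j + 1) : ℝ) / (j + 1))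
          + ((-1) ^ j * ((2 * p + n).choose (p + j) : ℝ)
            - (-1) ^ (j + 1) * ((2 * p + n).choose (p + (j + 1)) : ℝ)) := by
    intro j hj
    have hj : j ≤ n := Nat.lt_succ_iff.mp (mem_range.mp hj)
    have hpascal : ((2 * p + n + 1).choose (p + j + 1) : ℝ)
        = (2 * p + n).choose (p + j) + (2 * p + n).choose (p + j + 1) := by
      exact_mod_cast Nat.choose_succ_succ' (2 * p + n) (p + j)
    have habsorb : ((2 * p + n).choose (p + j + 1) : ℝ) * (2 * p + n + 1)
        = (2 * p + n + 1).choose (p + j + 1) * (p + n - j) := by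
      have h := Nat.choose_mul_succ_eq (2 * p + n) (p + j + 1)
      rw [show 2 * p + n + 1 - (p + j + 1) = p + n - j by omega] at h
      rw [← Nat.cast_add, ← Nat.cast_sub (by omega)]
      exact_mod_cast h
    rw [show 2 * p + (n + 1) = 2 * p + n + 1 by ring, ← add_assoc, pow_succ]
    field_simp
    linear_combination ((j : ℝ) + 1) * hpascal - habsorb
  rw [mul_sum, mul_sum, sum_congr rfl hterm, sum_add_distrib,
    sum_range_sub' (fun j => (-1 : ℝ) ^ j * ((2 * p + n).choose (p + j) : ℝ))]
  simp only [pow_zero, one_mul, add_zero, pow_succ, ← add_assoc]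
  ring

lemma sum_neg_one_pow_mul_choose_div_eq (p n : ℕ) :
    ∑ j ∈ range n, (-1 : ℝ) ^ j * ((2 * p + n).choose (p + j + 1) : ℝ) / (j + 1)
      = (2 * p + n).choose p * harmonicHalfDiff p n := by
  induction n with
  | zero => simp [harmonicHalfDiff]
  | succ n ih =>
    have hrec := sum_neg_one_pow_mul_choose_div_recurrence p n
    rw [sum_range_succ (fun j => (-1 : ℝ) ^ j * ((2 * p + n).choose (p + j + 1) : ℝ) / (j + 1)),
      ih] at hrec
    have hlow : ((2 * p + n).choose (p + n + 1) : ℝ) * (p + n + 1) = (2 * p + n).choose p * p := by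
      have h := Nat.choose_succ_right_eq (2 * p + n) (p + n)
      rw [Nat.choose_symm_of_eq_add (show 2 * p + n = p + n + p by ring),
        show 2 * p + n - (p + n) = p by omega] at h
      exact_mod_cast h
    have hsucc : ((2 * p + (n + 1)).choose p : ℝ) * (p + n + 1)
        = (2 * p + n).choose p * (2 * p + n + 1) := by
      have h := Nat.choose_mul_succ_eq (2 * p + n) p
      rw [show 2 * p + n + 1 - p = p + n + 1 by omega] at h
      exact_mod_cast h.symm
    rw [harmonicHalfDiff_succ]
    apply mul_left_cancel₀ (by positivity : (p + n + 1 : ℝ) ≠ 0)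
    rw [hrec]
    field_simp
    linear_combination 2 * (2 * p + n + 1 : ℝ) * (-1) ^ n * hlow
      - ((2 * p + n + 1) * (harmonicHalfDiff p n * (n + 1) + (-1) ^ n) + (n + 1) * (1 - (-1) ^ n))
        * hsucc

lemma sum_neg_one_pow_mul_choose_mul_choose_add_mul_H_eq (p n : ℕ) :
    ∑ k ∈ range (n + 1),
        (-1 : ℝ) ^ k * (n.choose k : ℝ) * ((2 * p + n + k).choose (p + k) : ℝ) * H k
      = (-1) ^ n * (2 * p + n).choose p * (H n + harmonicHalfDiff p n) := by
  rw [sum_neg_one_pow_mul_choose_mul_choose_add_mul_H_eq_sum, sum_neg_one_pow_mul_choose_div_eq]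
  ring

theorem stmt8 (p m : ℕ) :
    (∑ k ∈ Finset.range (2*m+1), (-1:ℝ)^k * ((2*m).choose k : ℝ) *
        (((2*p+2*m+k).choose (p+k) : ℕ) : ℝ) * H k
      = (((2*p+2*m).choose p : ℕ) : ℝ) * (2 * H (2*m) - H m + H (p+m) - H p)) ∧
    (∑ k ∈ Finset.range (2*m+2), (-1:ℝ)^k * ((2*m+1).choose k : ℝ) *
        (((2*p+2*m+1+k).choose (p+k) : ℕ) : ℝ) * H k
      = (((2*p+2*m+1).choose p : ℕ) : ℝ) * (H p - H (p+m) + H m - 2 * H (2*m+1))) := by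
  constructor
  · rw [sum_neg_one_pow_mul_choose_mul_choose_add_mul_H_eq, harmonicHalfDiff,
      Nat.mul_div_cancel_left m two_pos, (even_two_mul m).neg_one_pow]
    ring
  · have h := sum_neg_one_pow_mul_choose_mul_choose_add_mul_H_eq p (2 * m + 1)
    simp only [← add_assoc, harmonicHalfDiff, show (2 * m + 1) / 2 = m by omega,
      (odd_two_mul_add_one m).neg_one_pow] at h
    rw [h]
    ring
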